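/- arXiv:2306.06287 — 3 statements merged into one kernel-verified Lean document; each statement's English description precedes it below -/
import Mathlib

section
/- Let S ⊆ ℝ be a convex set, let β ∈ ℝ, let V₁, V₂, V₃ : ℝ → ℝ be concave on S with V₁(ρ), V₂(ρ), V₃(ρ) > 0 for every ρ ∈ S, and let F : ℝ → ℝ be concave on S. Then for every d ≥ 1 the scalar mean-field-control integrand (ρ, m, s, n) ↦ ‖m‖²/(2V₁(ρ)) + s²/(2V₂(ρ)) + β²‖n‖²/(2V₃(ρ)) − F(ρ) is convex on the convex set S × ℝᵈ × ℝ × ℝᵈ. -/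
/-!
Each kinetic term has the form `‖L q‖² / V ρ` with `L` linear and `V` positive concave.
The map `(x, v) ↦ ‖x‖² / v` is jointly convex on `E × (0, ∞)` (a Cauchy–Schwarz inequality
in two terms) and nonincreasing in `v`, so composing it with the concave `V` keeps it convex;
`-F` is convex, and a sum of convex functions is convex.
-/

open Set

theorem sq_add_div_add_le {a b u v : ℝ} (x y : ℝ) (ha : 0 ≤ a) (hb : 0 ≤ b) (hab : a + b = 1)
    (hu : 0 < u) (hv : 0 < v) :
    (a * x + b * y) ^ 2 / (a * u + b * v) ≤ a * (x ^ 2 / u) + b * (y ^ 2 / v) := by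
  have hw : 0 < a * u + b * v := convex_Ioi (0 : ℝ) hu hv ha hb hab
  have hsplit :
      a * (x ^ 2 / u) + b * (y ^ 2 / v) = (a * x ^ 2 * v + b * y ^ 2 * u) / (u * v) := by
    field_simp
  -- the gap is `a b (x v - y u)² / (u v)`
  rw [div_le_iff₀ hw, hsplit, div_mul_eq_mul_div, le_div_iff₀ (by positivity)]
  nlinarith [mul_nonneg (mul_nonneg ha hb) (sq_nonneg (x * v - y * u))]

theorem ConcaveOn.convexOn_norm_sq_div {X E : Type*} [AddCommGroup X] [Module ℝ X]
    [SeminormedAddCommGroup E] [NormedSpace ℝ E] {S : Set X} {V : X → ℝ}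
    (hV : ConcaveOn ℝ S V) (hVpos : ∀ ρ ∈ S, 0 < V ρ) :
    ConvexOn ℝ (S ×ˢ univ) (fun p : X × E => ‖p.2‖ ^ 2 / V p.1) := by
  refine ⟨hV.1.prod convex_univ, ?_⟩
  rintro ⟨ρ, x⟩ ⟨hρ, -⟩ ⟨σ, y⟩ ⟨hσ, -⟩ a b ha hb hab
  have hnorm : ‖a • x + b • y‖ ≤ a * ‖x‖ + b * ‖y‖ :=
    norm_add_le_of_le (by rw [norm_smul, Real.norm_of_nonneg ha])
      (by rw [norm_smul, Real.norm_of_nonneg hb])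
  calc ‖a • x + b • y‖ ^ 2 / V (a • ρ + b • σ)
      ≤ (a * ‖x‖ + b * ‖y‖) ^ 2 / (a * V ρ + b * V σ) :=
        div_le_div₀ (by positivity) (pow_le_pow_left₀ (norm_nonneg _) hnorm 2)
          (convex_Ioi (0 : ℝ) (hVpos ρ hρ) (hVpos σ hσ) ha hb hab) (hV.2 hρ hσ ha hb hab)
    _ ≤ a * (‖x‖ ^ 2 / V ρ) + b * (‖y‖ ^ 2 / V σ) :=
        sq_add_div_add_le _ _ ha hb hab (hVpos ρ hρ) (hVpos σ hσ)

theorem ConcaveOn.convexOn_norm_sq_comp_div {X Y E : Type*} [AddCommGroup X] [Module ℝ X]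
    [AddCommGroup Y] [Module ℝ Y] [SeminormedAddCommGroup E] [NormedSpace ℝ E]
    {S : Set X} {V : X → ℝ} (hV : ConcaveOn ℝ S V) (hVpos : ∀ ρ ∈ S, 0 < V ρ)
    (L : Y →ₗ[ℝ] E) :
    ConvexOn ℝ (S ×ˢ univ) (fun q : X × Y => ‖L q.2‖ ^ 2 / V q.1) := by
  have h := (hV.convexOn_norm_sq_div (E := E) hVpos).comp_linearMap (LinearMap.id.prodMap L)
  rwa [LinearMap.coe_prodMap, LinearMap.id_coe, preimage_prod_map_prod, preimage_id,
    preimage_univ] at h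

theorem scalar_mfc_integrand_convex_general (S : Set ℝ) (β : ℝ)
    (V₁ V₂ V₃ F : ℝ → ℝ)
    (hV₁ : ConcaveOn ℝ S V₁) (hV₂ : ConcaveOn ℝ S V₂) (hV₃ : ConcaveOn ℝ S V₃)
    (hV₁pos : ∀ ρ ∈ S, 0 < V₁ ρ) (hV₂pos : ∀ ρ ∈ S, 0 < V₂ ρ)
    (hV₃pos : ∀ ρ ∈ S, 0 < V₃ ρ)
    (hF : ConcaveOn ℝ S F) (d : ℕ) :
    ConvexOn ℝ
      (S ×ˢ (Set.univ : Set (EuclideanSpace ℝ (Fin d))) ×ˢ (Set.univ : Set ℝ) ×ˢ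
        (Set.univ : Set (EuclideanSpace ℝ (Fin d))))
      (fun q : ℝ × EuclideanSpace ℝ (Fin d) × ℝ × EuclideanSpace ℝ (Fin d) =>
        ‖q.2.1‖ ^ 2 / (2 * V₁ q.1) + q.2.2.1 ^ 2 / (2 * V₂ q.1)
          + β ^ 2 * ‖q.2.2.2‖ ^ 2 / (2 * V₃ q.1) - F q.1) := by
  set E := EuclideanSpace ℝ (Fin d)
  have hpos (V : ℝ → ℝ) (hV : ∀ ρ ∈ S, 0 < V ρ) : ∀ ρ ∈ S, 0 < 2 * V ρ :=
    fun ρ hρ => mul_pos two_pos (hV ρ hρ)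
  have h₁ := (hV₁.smul zero_le_two).convexOn_norm_sq_comp_div (hpos V₁ hV₁pos)
    (LinearMap.fst ℝ E (ℝ × E))
  have h₂ := (hV₂.smul zero_le_two).convexOn_norm_sq_comp_div (hpos V₂ hV₂pos)
    (LinearMap.fst ℝ ℝ E ∘ₗ LinearMap.snd ℝ E (ℝ × E))
  have h₃ := (hV₃.smul zero_le_two).convexOn_norm_sq_comp_div (hpos V₃ hV₃pos)
    (β • (LinearMap.snd ℝ ℝ E ∘ₗ LinearMap.snd ℝ E (ℝ × E)))
  have h₄ : ConvexOn ℝ (S ×ˢ univ) (fun q : ℝ × E × ℝ × E => -F q.1) := by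
    have h := hF.neg.comp_linearMap (LinearMap.fst ℝ ℝ (E × ℝ × E))
    rwa [LinearMap.coe_fst, ← prod_univ] at h
  rw [univ_prod_univ, univ_prod_univ]
  refine (((h₁.add h₂).add h₃).add h₄).congr fun q _ => ?_
  simp [norm_smul, mul_pow, sub_eq_add_neg]

/-- Convexity of the scalar mean-field-control integrand
`(ρ, m, s, n) ↦ ‖m‖²/(2V₁ρ) + s²/(2V₂ρ) + β²‖n‖²/(2V₃ρ) − F ρ`
on `S × ℝᵈ × ℝ × ℝᵈ`, for `V₁, V₂, V₃` positive concave and `F` concave on `S`. -/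
theorem scalar_mfc_integrand_convex (S : Set ℝ) (hS : Convex ℝ S) (β : ℝ)
    (V₁ V₂ V₃ F : ℝ → ℝ)
    (hV₁ : ConcaveOn ℝ S V₁) (hV₂ : ConcaveOn ℝ S V₂) (hV₃ : ConcaveOn ℝ S V₃)
    (hV₁pos : ∀ ρ ∈ S, 0 < V₁ ρ) (hV₂pos : ∀ ρ ∈ S, 0 < V₂ ρ)
    (hV₃pos : ∀ ρ ∈ S, 0 < V₃ ρ)
    (hF : ConcaveOn ℝ S F) (d : ℕ) (hd : 1 ≤ d) :
    ConvexOn ℝ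
      (S ×ˢ (Set.univ : Set (EuclideanSpace ℝ (Fin d))) ×ˢ (Set.univ : Set ℝ) ×ˢ
        (Set.univ : Set (EuclideanSpace ℝ (Fin d))))
      (fun q : ℝ × EuclideanSpace ℝ (Fin d) × ℝ × EuclideanSpace ℝ (Fin d) =>
        ‖q.2.1‖ ^ 2 / (2 * V₁ q.1) + q.2.2.1 ^ 2 / (2 * V₂ q.1)
          + β ^ 2 * ‖q.2.2.2‖ ^ 2 / (2 * V₃ q.1) - F q.1) :=
  scalar_mfc_integrand_convex_general S β V₁ V₂ V₃ F hV₁ hV₂ hV₃ hV₁pos hV₂pos hV₃pos hF d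
end

section
/- Define f : (0, ∞) → ℝ by f(ρ) = (ρ − 1)/log ρ for ρ ≠ 1 and f(1) = 1. Then f(ρ) > 0 for all ρ > 0, and f is concave on (0, ∞). -/
/-- The scalar mobility `f(ρ) = (ρ − 1)/log ρ` for `ρ ≠ 1`, `f(1) = 1`. -/
noncomputable def mobilityLog (ρ : ℝ) : ℝ :=
  if ρ = 1 then 1 else (ρ - 1) / Real.log ρ

/-!
The mobility is the logarithmic mean of `ρ` and `1`, which has the integral representation
`f(ρ) = ∫₀¹ ρ^s ds`. Each `ρ ↦ ρ^s` with `s ∈ [0, 1]` is positive and concave on `(0, ∞)`,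
and both properties survive integration in `s`.
-/

open MeasureTheory Set

theorem concaveOn_integral {E Ω : Type*} [AddCommMonoid E] [Module ℝ E] [MeasurableSpace Ω]
    {μ : Measure Ω} {D : Set E} {g : Ω → E → ℝ} (hD : Convex ℝ D)
    (hg : ∀ᵐ ω ∂μ, ConcaveOn ℝ D (g ω)) (hint : ∀ x ∈ D, Integrable (fun ω => g ω x) μ) :
    ConcaveOn ℝ D fun x => ∫ ω, g ω x ∂μ := by
  refine ⟨hD, fun x hx y hy a b ha hb hab => ?_⟩
  have hcomb : Integrable (fun ω => a * g ω x + b * g ω y) μ :=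
    ((hint x hx).const_mul a).add ((hint y hy).const_mul b)
  calc a • ∫ ω, g ω x ∂μ + b • ∫ ω, g ω y ∂μ = ∫ ω, a * g ω x + b * g ω y ∂μ := by
        rw [integral_add ((hint x hx).const_mul a) ((hint y hy).const_mul b), integral_const_mul,
          integral_const_mul, smul_eq_mul, smul_eq_mul]
    _ ≤ ∫ ω, g ω (a • x + b • y) ∂μ :=
        integral_mono_ae hcomb
          (hint _ (hD hx hy ha hb hab)) (hg.mono fun ω hω => hω.2 hx hy ha hb hab)

theorem mobilityLog_eq_integral_rpow {x : ℝ} (hx : 0 < x) :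
    mobilityLog x = ∫ s in (0 : ℝ)..1, x ^ s := by
  rcases eq_or_ne x 1 with rfl | hx1
  · simp [mobilityLog]
  have hlog : Real.log x ≠ 0 := Real.log_ne_zero_of_pos_of_ne_one hx hx1
  calc mobilityLog x = (Real.log x)⁻¹ * (Real.exp (Real.log x) - Real.exp 0) := by
        rw [mobilityLog, if_neg hx1, Real.exp_log hx, Real.exp_zero, div_eq_inv_mul]
    _ = ∫ s in (0 : ℝ)..1, Real.exp (Real.log x * s) := by
        rw [intervalIntegral.integral_comp_mul_left _ hlog, mul_zero, mul_one, integral_exp,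
          smul_eq_mul]
    _ = ∫ s in (0 : ℝ)..1, x ^ s := by simp only [Real.rpow_def_of_pos hx]

/-- `f(ρ) = (ρ − 1)/log ρ` (with `f(1) = 1`) is positive and concave on `(0, ∞)`. -/
theorem mobilityLog_pos_and_concave :
    (∀ ρ : ℝ, 0 < ρ → 0 < mobilityLog ρ) ∧
      ConcaveOn ℝ (Set.Ioi (0 : ℝ)) mobilityLog := by
  refine ⟨fun ρ hρ => ?_, ?_⟩
  · rw [mobilityLog_eq_integral_rpow hρ]
    exact intervalIntegral.intervalIntegral_pos_of_pos_on
      ((Real.continuous_const_rpow hρ.ne').intervalIntegrable _ _)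
      (fun s _ => Real.rpow_pos_of_pos hρ s) zero_lt_one
  have hconcave : ConcaveOn ℝ (Ioi 0) fun x : ℝ => ∫ s in Ioc (0 : ℝ) 1, x ^ s :=
    concaveOn_integral (convex_Ioi 0)
      (ae_restrict_of_forall_mem measurableSet_Ioc fun s hs =>
        (Real.concaveOn_rpow hs.1.le hs.2).subset Ioi_subset_Ici_self (convex_Ioi 0))
      (fun x hx => (Real.continuous_const_rpow hx.ne').integrableOn_Icc.mono_set
        Ioc_subset_Icc_self)
  refine hconcave.congr fun x hx => ?_
  rw [mobilityLog_eq_integral_rpow hx, intervalIntegral.integral_of_le zero_le_one]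
end

section
/- Let d ≥ 1 and let Ω = [0,1]ᵈ ⊂ ℝᵈ be the closed unit cube with outward unit normal ν on its boundary ∂Ω. Let T > 0, β ∈ ℝ, let V₁, V₂ : ℝ → ℝ be continuous with V₁ > 0 and V₂ > 0 on ℝ, and let E : ℝ → ℝ be twice continuously differentiable. Let ρ : [0,T] × Ω → ℝ be continuously differentiable, let m : [0,T] × Ω → ℝᵈ be continuous and continuously differentiable in x with m·ν = 0 on [0,T] × ∂Ω, and let s : [0,T] × Ω → ℝ be continuous, such that ∂ₜρ + ∇·m − s = 0 on [0,T] × Ω. Define m̃ = m + βV₁(ρ)∇(E′(ρ)) and s̃ = s + βV₂(ρ)E′(ρ). Then ∫₀ᵀ∫_Ω [ ‖m̃‖²/(2V₁(ρ)) + |s̃|²/(2V₂(ρ)) ] dx dt = ∫₀ᵀ∫_Ω [ ‖m‖²/(2V₁(ρ)) + |s|²/(2V₂(ρ)) + (β²/2)V₁(ρ)‖∇(E′(ρ))‖² + (β²/2)V₂(ρ)|E′(ρ)|² ] dx dt + β ∫_Ω ( E(ρ(T,x)) − E(ρ(0,x)) ) dx. -/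
/-!
Write `φ = E′(ρ)`. Expanding the squares, the shifted kinetic energy is the original one plus the
two Fisher-information terms plus the cross term `β (m·∇φ + s φ)`. At each time,
`m·∇φ = ∇·(φ m) − φ ∇·m`; the divergence integrates to zero over the cube by the no-flux condition,
and the continuity equation turns `φ (s − ∇·m)` into `φ ∂ₜρ = ∂ₜ E(ρ)`. After swapping the order of
integration (Fubini), the fundamental theorem of calculus in time leaves
`β ∫_Ω (E(ρ(T)) − E(ρ(0)))`.
-/

open MeasureTheory Set

/-- `i`-th partial derivative of a scalar field on `ℝᵈ`. -/
noncomputable def pd (d : ℕ) (f : (Fin d → ℝ) → ℝ) (i : Fin d) (x : Fin d → ℝ) : ℝ :=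
  fderiv ℝ f x (Pi.single i 1)

/-- Divergence of a vector field on `ℝᵈ`. -/
noncomputable def divg (d : ℕ) (F : (Fin d → ℝ) → (Fin d → ℝ)) (x : Fin d → ℝ) : ℝ :=
  ∑ i, pd d (fun y => F y i) i x

section PartialDerivatives

variable {d : ℕ}

theorem ContDiff.continuous_pd {f : (Fin d → ℝ) → ℝ} (hf : ContDiff ℝ 1 f) (i : Fin d) :
    Continuous (pd d f i) :=
  (hf.continuous_fderiv one_ne_zero).clm_apply continuous_const

theorem pd_mul {f g : (Fin d → ℝ) → ℝ} {x : Fin d → ℝ} (hf : DifferentiableAt ℝ f x)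
    (hg : DifferentiableAt ℝ g x) (i : Fin d) :
    pd d (fun y => f y * g y) i x = pd d f i x * g x + f x * pd d g i x := by
  simp only [pd, fderiv_fun_mul hf hg, add_apply, smul_apply, smul_eq_mul]
  ring

theorem divg_smul {φ : (Fin d → ℝ) → ℝ} {F : (Fin d → ℝ) → (Fin d → ℝ)} {x : Fin d → ℝ}
    (hφ : DifferentiableAt ℝ φ x) (hF : ∀ i, DifferentiableAt ℝ (fun y => F y i) x) :
    divg d (fun y => φ y • F y) x = ∑ i, F x i * pd d φ i x + φ x * divg d F x := by
  simp only [divg, Pi.smul_apply, smul_eq_mul, pd_mul hφ (hF _), Finset.sum_add_distrib,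
    Finset.mul_sum, mul_comm (pd d φ _ x)]

variable {P X : Type*} [NormedAddCommGroup P] [NormedSpace ℝ P] [NormedAddCommGroup X]
  [NormedSpace ℝ X]

theorem fderiv_slice_apply {f : P → X → ℝ} {p : P} {x : X}
    (hf : DifferentiableAt ℝ (fun q : P × X => f q.1 q.2) (p, x)) (v : X) :
    fderiv ℝ (f p) x v = fderiv ℝ (fun q : P × X => f q.1 q.2) (p, x) (0, v) := by
  have h := (hf.hasFDerivAt.comp x (hasFDerivAt_prodMk_right p x)).fderiv
  exact congrArg (fun L => L v) h

theorem continuous_pd_slice {f : P → (Fin d → ℝ) → ℝ}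
    (hf : ContDiff ℝ 1 (fun q : P × (Fin d → ℝ) => f q.1 q.2)) (i : Fin d) :
    Continuous (fun q : P × (Fin d → ℝ) => pd d (f q.1) i q.2) := by
  simp only [pd, fderiv_slice_apply ((hf.differentiable one_ne_zero) _)]
  exact (hf.continuous_fderiv one_ne_zero).clm_apply continuous_const

theorem deriv_slice_eq {f : ℝ → X → ℝ} {t : ℝ} {x : X}
    (hf : DifferentiableAt ℝ (fun q : ℝ × X => f q.1 q.2) (t, x)) :
    deriv (fun τ => f τ x) t = fderiv ℝ (fun q : ℝ × X => f q.1 q.2) (t, x) (1, 0) := by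
  have h : HasDerivAt (fun τ : ℝ => (τ, x)) ((1 : ℝ), (0 : X)) t :=
    (hasDerivAt_id t).prodMk (hasDerivAt_const t x)
  exact (hf.hasFDerivAt.comp_hasDerivAt t h).deriv

theorem continuous_deriv_slice {f : ℝ → X → ℝ} (hf : ContDiff ℝ 1 (fun q : ℝ × X => f q.1 q.2)) :
    Continuous (fun q : ℝ × X => deriv (fun τ => f τ q.2) q.1) := by
  simp only [deriv_slice_eq ((hf.differentiable one_ne_zero) _)]
  exact (hf.continuous_fderiv one_ne_zero).clm_apply continuous_const

end PartialDerivatives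

section Cube

variable {d : ℕ} {a b : Fin d → ℝ}

theorem mem_frontier_Icc_of_apply_eq {y : Fin d → ℝ} (hy : y ∈ Icc a b) {i : Fin d}
    (hi : y i = a i ∨ y i = b i) : y ∈ frontier (Icc a b) := by
  rw [isClosed_Icc.frontier_eq, ← pi_univ_Icc, interior_pi_set finite_univ]
  refine ⟨pi_univ_Icc a b ▸ hy, fun hint => ?_⟩
  have := hint i (mem_univ i)
  rcases hi with h | h <;> simp [h] at this

theorem integral_divg_eq_zero_of_flux_eq_zero (hab : a ≤ b) {F : (Fin d → ℝ) → (Fin d → ℝ)}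
    (hF : ∀ i, ContDiff ℝ 1 (fun y => F y i))
    (hflux : ∀ y ∈ Icc a b, ∀ i, (y i = a i ∨ y i = b i) → F y i = 0) :
    ∫ x in Icc a b, divg d F x = 0 := by
  cases d with
  | zero => simp [divg]
  | succ n =>
    have hdiv := integral_divergence_of_hasFDerivAt_off_countable' a b hab (fun i y => F y i)
      (fun i y => fderiv ℝ (fun z => F z i) y) ∅ countable_empty
      (fun i => (hF i).continuous.continuousOn)
      (fun x _ i => ((hF i).differentiable one_ne_zero x).hasFDerivAt)
      (continuous_finsetSum _ fun i _ => (hF i).continuous_pd i).integrableOn_Icc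
    refine hdiv.trans (Finset.sum_eq_zero fun i _ => ?_)
    have hface : ∀ c ∈ ({a i, b i} : Set ℝ), ∀ x ∈ Icc (a ∘ i.succAbove) (b ∘ i.succAbove),
        F (i.insertNth c x) i = 0 := fun c hc x hx =>
      hflux _ (Fin.insertNth_mem_Icc.2 ⟨by aesop, hx⟩) i (by simpa using hc)
    rw [setIntegral_eq_zero_of_forall_eq_zero (hface _ (by simp)),
      setIntegral_eq_zero_of_forall_eq_zero (hface _ (by simp)), sub_zero]

theorem integral_sum_mul_pd_add_mul_of_balance (hab : a ≤ b)
    {φ ρ' s : (Fin d → ℝ) → ℝ} {m : (Fin d → ℝ) → (Fin d → ℝ)} (hφ : ContDiff ℝ 1 φ)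
    (hm : ∀ i, ContDiff ℝ 1 (fun y => m y i)) (hρ' : Continuous ρ')
    (hflux : ∀ y ∈ Icc a b, ∀ i, (y i = a i ∨ y i = b i) → m y i = 0)
    (hbal : ∀ x ∈ Icc a b, ρ' x + divg d m x - s x = 0) :
    ∫ x in Icc a b, (∑ i, m x i * pd d φ i x + s x * φ x) = ∫ x in Icc a b, φ x * ρ' x := by
  have hφm : ∀ i, ContDiff ℝ 1 (fun y => (φ y • m y) i) := fun i => hφ.mul (hm i)
  have hpointwise : ∀ x ∈ Icc a b, ∑ i, m x i * pd d φ i x + s x * φ x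
      = divg d (fun y => φ y • m y) x + φ x * ρ' x := by
    intro x hx
    rw [divg_smul ((hφ.differentiable one_ne_zero) x)
      fun i => ((hm i).differentiable one_ne_zero) x]
    linear_combination -φ x * hbal x hx
  have hcont : Continuous (divg d fun y => φ y • m y) :=
    continuous_finsetSum _ fun i _ => (hφm i).continuous_pd i
  have hcont' : Continuous fun x => φ x * ρ' x := hφ.continuous.mul hρ'
  rw [setIntegral_congr_fun measurableSet_Icc hpointwise,
    integral_add hcont.integrableOn_Icc hcont'.integrableOn_Icc,
    integral_divg_eq_zero_of_flux_eq_zero hab hφm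
      fun y hy i hi => by simp [hflux y hy i hi], zero_add]

end Cube

theorem integral_Icc_deriv_comp_mul_deriv {a b : ℝ} (hab : a ≤ b) {E g : ℝ → ℝ}
    (hE : ContDiff ℝ 1 E) (hg : ContDiff ℝ 1 g) :
    ∫ t in Icc a b, deriv E (g t) * deriv g t = E (g b) - E (g a) := by
  rw [integral_Icc_eq_integral_Ioc, ← intervalIntegral.integral_of_le hab]
  exact intervalIntegral.integral_deriv_comp_mul_deriv
    (fun t _ => ((hg.differentiable one_ne_zero) t).hasDerivAt)
    (fun t _ => ((hE.differentiable one_ne_zero) _).hasDerivAt)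
    (hg.continuous_deriv le_rfl).continuousOn (hE.continuous_deriv le_rfl)

section Compact

variable {X : Type*} [TopologicalSpace X] [T2Space X] [MeasurableSpace X] [OpensMeasurableSpace X]
  {μ : Measure X} [IsFiniteMeasureOnCompacts μ] {K : Set X}

theorem setIntegral_add_const_mul_of_continuous (hK : IsCompact K) {f g : X → ℝ}
    (hf : Continuous f) (hg : Continuous g) (c : ℝ) :
    ∫ x in K, (f x + c * g x) ∂μ = ∫ x in K, f x ∂μ + c * ∫ x in K, g x ∂μ := by
  rw [integral_add (hf.continuousOn.integrableOn_compact hK)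
    ((hg.continuousOn.integrableOn_compact hK).const_mul c), integral_const_mul]

variable {Y : Type*} [TopologicalSpace Y] [T2Space Y] [MeasurableSpace Y] [OpensMeasurableSpace Y]
  {ν : Measure Y} [IsFiniteMeasureOnCompacts ν] {L : Set Y}

theorem setIntegral_setIntegral_swap_of_continuous [SecondCountableTopologyEither X Y]
    [SFinite μ] [SFinite ν] (hK : IsCompact K) (hL : IsCompact L) {f : X → Y → ℝ}
    (hf : Continuous (Function.uncurry f)) :
    ∫ x in K, ∫ y in L, f x y ∂ν ∂μ = ∫ y in L, ∫ x in K, f x y ∂μ ∂ν := by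
  apply integral_integral_swap
  rw [Measure.prod_restrict]
  exact hf.continuousOn.integrableOn_compact (hK.prod hL)

theorem setIntegral_setIntegral_add_const_mul_of_continuous [FirstCountableTopology X]
    [LocallyCompactSpace X] [IsLocallyFiniteMeasure ν] (hK : IsCompact K) (hL : IsCompact L)
    {f g : X → Y → ℝ} (hf : Continuous (Function.uncurry f))
    (hg : Continuous (Function.uncurry g)) (c : ℝ) :
    ∫ x in K, ∫ y in L, (f x y + c * g x y) ∂ν ∂μ
      = ∫ x in K, ∫ y in L, f x y ∂ν ∂μ + c * ∫ x in K, ∫ y in L, g x y ∂ν ∂μ := by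
  have hinner : ∀ x, ∫ y in L, (f x y + c * g x y) ∂ν
      = ∫ y in L, f x y ∂ν + c * ∫ y in L, g x y ∂ν := fun x =>
    setIntegral_add_const_mul_of_continuous hL (hf.uncurry_left x) (hg.uncurry_left x) c
  simp only [hinner]
  exact setIntegral_add_const_mul_of_continuous hK
    (continuous_parametric_integral_of_continuous hf hL)
    (continuous_parametric_integral_of_continuous hg hL) c

end Compact

theorem shifted_kinetic_energy {ι : Type*} [Fintype ι] {v₁ v₂ : ℝ} (h₁ : v₁ ≠ 0) (h₂ : v₂ ≠ 0)
    (β s e : ℝ) (m g : ι → ℝ) :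
    (∑ i, (m i + β * (v₁ * g i)) ^ 2) / (2 * v₁) + (s + β * (v₂ * e)) ^ 2 / (2 * v₂)
      = (∑ i, m i ^ 2) / (2 * v₁) + s ^ 2 / (2 * v₂) + β ^ 2 / 2 * v₁ * ∑ i, g i ^ 2
        + β ^ 2 / 2 * v₂ * e ^ 2 + β * (∑ i, m i * g i + s * e) := by
  have hsum : ∑ i, (m i + β * (v₁ * g i)) ^ 2
      = ∑ i, m i ^ 2 + 2 * β * v₁ * ∑ i, m i * g i + β ^ 2 * v₁ ^ 2 * ∑ i, g i ^ 2 := by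
    simp only [Finset.mul_sum, ← Finset.sum_add_distrib]
    exact Finset.sum_congr rfl fun i _ => by ring
  rw [hsum]
  field_simp
  ring

/-- On the cube the outward normal at a point `x` with `x i ∈ {0, 1}` is `∓eᵢ`, so the no-flux
condition `m·ν = 0` reads `m t x i = 0`. -/
theorem scalar_mfc_energy_identity_general (d : ℕ) (T : ℝ) (hT : 0 < T) (β : ℝ)
    (V₁ V₂ : ℝ → ℝ) (hV₁c : Continuous V₁) (hV₂c : Continuous V₂)
    (hV₁pos : ∀ r, 0 < V₁ r) (hV₂pos : ∀ r, 0 < V₂ r)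
    (E : ℝ → ℝ) (hE : ContDiff ℝ 2 E)
    (ρ : ℝ → (Fin d → ℝ) → ℝ)
    (hρ : ContDiff ℝ 1 (fun q : ℝ × (Fin d → ℝ) => ρ q.1 q.2))
    (m : ℝ → (Fin d → ℝ) → (Fin d → ℝ))
    (hmc : Continuous (fun q : ℝ × (Fin d → ℝ) => m q.1 q.2))
    (hmx : ∀ t, ∀ i : Fin d, ContDiff ℝ 1 (fun x => m t x i))
    (s : ℝ → (Fin d → ℝ) → ℝ)
    (hsc : Continuous (fun q : ℝ × (Fin d → ℝ) => s q.1 q.2))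
    (hbc : ∀ t ∈ Set.Icc (0 : ℝ) T,
      ∀ x ∈ frontier (Set.Icc (0 : Fin d → ℝ) 1), ∀ i : Fin d,
        (x i = 0 ∨ x i = 1) → m t x i = 0)
    (hpde : ∀ t ∈ Set.Icc (0 : ℝ) T, ∀ x ∈ Set.Icc (0 : Fin d → ℝ) 1,
      deriv (fun τ => ρ τ x) t + divg d (m t) x - s t x = 0)
    (mt : ℝ → (Fin d → ℝ) → (Fin d → ℝ))
    (st : ℝ → (Fin d → ℝ) → ℝ)
    (hmt : ∀ t x i, mt t x i
      = m t x i + β * (V₁ (ρ t x) * pd d (fun z => deriv E (ρ t z)) i x))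
    (hst : ∀ t x, st t x = s t x + β * (V₂ (ρ t x) * deriv E (ρ t x))) :
    (∫ t in Set.Icc (0 : ℝ) T, ∫ x in Set.Icc (0 : Fin d → ℝ) 1,
        ((∑ i, (mt t x i) ^ 2) / (2 * V₁ (ρ t x))
          + (st t x) ^ 2 / (2 * V₂ (ρ t x))))
      = (∫ t in Set.Icc (0 : ℝ) T, ∫ x in Set.Icc (0 : Fin d → ℝ) 1,
          ((∑ i, (m t x i) ^ 2) / (2 * V₁ (ρ t x))
            + (s t x) ^ 2 / (2 * V₂ (ρ t x))
            + (β ^ 2 / 2) * V₁ (ρ t x)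
                * (∑ i, (pd d (fun z => deriv E (ρ t z)) i x) ^ 2)
            + (β ^ 2 / 2) * V₂ (ρ t x) * (deriv E (ρ t x)) ^ 2))
        + β * ∫ x in Set.Icc (0 : Fin d → ℝ) 1, (E (ρ T x) - E (ρ 0 x)) := by
  have hV₁ne : ∀ r, V₁ r ≠ 0 := fun r => (hV₁pos r).ne'
  have hV₂ne : ∀ r, V₂ r ≠ 0 := fun r => (hV₂pos r).ne'
  have hE' : ContDiff ℝ 1 (deriv E) := hE.deriv' (n := 1)
  have hρ_x : ∀ t, ContDiff ℝ 1 (ρ t) := fun t => hρ.comp (contDiff_const.prodMk contDiff_id)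
  have hρc := hρ.continuous
  have hE'c := hE'.continuous
  have hρ' := continuous_deriv_slice hρ
  have hpdφ := continuous_pd_slice (f := fun t z => deriv E (ρ t z)) (hE'.comp hρ)
  simp only [hmt, hst, shifted_kinetic_energy (hV₁ne _) (hV₂ne _)]
  rw [setIntegral_setIntegral_add_const_mul_of_continuous isCompact_Icc isCompact_Icc
    ?energy ?cross]
  case energy => fun_prop (disch := simp [hV₁ne, hV₂ne])
  case cross => fun_prop
  congr 2
  calc ∫ t in Icc (0 : ℝ) T, ∫ x in Icc (0 : Fin d → ℝ) 1,
        (∑ i, m t x i * pd d (fun z => deriv E (ρ t z)) i x + s t x * deriv E (ρ t x))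
      = ∫ t in Icc (0 : ℝ) T, ∫ x in Icc (0 : Fin d → ℝ) 1,
          deriv E (ρ t x) * deriv (fun τ => ρ τ x) t :=
        setIntegral_congr_fun measurableSet_Icc fun t ht =>
          integral_sum_mul_pd_add_mul_of_balance zero_le_one (φ := fun z => deriv E (ρ t z))
            (ρ' := fun x => deriv (fun τ => ρ τ x) t) (hE'.comp (hρ_x t)) (hmx t)
            (hρ'.comp (continuous_const.prodMk continuous_id))
            (fun y hy i hi => hbc t ht y (mem_frontier_Icc_of_apply_eq hy hi) i hi) (hpde t ht)
    _ = ∫ x in Icc (0 : Fin d → ℝ) 1, ∫ t in Icc (0 : ℝ) T,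
          deriv E (ρ t x) * deriv (fun τ => ρ τ x) t :=
        setIntegral_setIntegral_swap_of_continuous isCompact_Icc isCompact_Icc
          (f := fun t x => deriv E (ρ t x) * deriv (fun τ => ρ τ x) t) (by fun_prop)
    _ = ∫ x in Icc (0 : Fin d → ℝ) 1, (E (ρ T x) - E (ρ 0 x)) :=
        setIntegral_congr_fun measurableSet_Icc fun x _ =>
          integral_Icc_deriv_comp_mul_deriv hT.le (hE.of_le one_le_two)
            (hρ.comp (contDiff_id.prodMk contDiff_const))

/-- The integral identity behind the scalar mean-field control reformulation: if
`∂ₜρ + ∇·m − s = 0` on `[0,T] × [0,1]ᵈ` with no-flux boundary condition for `m` on the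
cube (at a boundary point `x` with `x i ∈ {0,1}` the outward normal is `∓eᵢ`, so `m·ν = 0`
means the vanishing of the corresponding component), and
`m̃ = m + βV₁(ρ)∇(E′(ρ))`, `s̃ = s + βV₂(ρ)E′(ρ)`, then
`∫₀ᵀ∫_Ω [‖m̃‖²/(2V₁ρ) + s̃²/(2V₂ρ)]
  = ∫₀ᵀ∫_Ω [‖m‖²/(2V₁ρ) + s²/(2V₂ρ) + (β²/2)V₁(ρ)‖∇E′(ρ)‖² + (β²/2)V₂(ρ)E′(ρ)²]
    + β∫_Ω (E(ρ(T,·)) − E(ρ(0,·)))`. -/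
theorem scalar_mfc_energy_identity (d : ℕ) (hd : 1 ≤ d) (T : ℝ) (hT : 0 < T) (β : ℝ)
    (V₁ V₂ : ℝ → ℝ) (hV₁c : Continuous V₁) (hV₂c : Continuous V₂)
    (hV₁pos : ∀ r, 0 < V₁ r) (hV₂pos : ∀ r, 0 < V₂ r)
    (E : ℝ → ℝ) (hE : ContDiff ℝ 2 E)
    (ρ : ℝ → (Fin d → ℝ) → ℝ)
    (hρ : ContDiff ℝ 1 (fun q : ℝ × (Fin d → ℝ) => ρ q.1 q.2))
    (m : ℝ → (Fin d → ℝ) → (Fin d → ℝ))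
    (hmc : Continuous (fun q : ℝ × (Fin d → ℝ) => m q.1 q.2))
    (hmx : ∀ t, ∀ i : Fin d, ContDiff ℝ 1 (fun x => m t x i))
    (s : ℝ → (Fin d → ℝ) → ℝ)
    (hsc : Continuous (fun q : ℝ × (Fin d → ℝ) => s q.1 q.2))
    (hbc : ∀ t ∈ Set.Icc (0 : ℝ) T,
      ∀ x ∈ frontier (Set.Icc (0 : Fin d → ℝ) 1), ∀ i : Fin d,
        (x i = 0 ∨ x i = 1) → m t x i = 0)
    (hpde : ∀ t ∈ Set.Icc (0 : ℝ) T, ∀ x ∈ Set.Icc (0 : Fin d → ℝ) 1,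
      deriv (fun τ => ρ τ x) t + divg d (m t) x - s t x = 0)
    (mt : ℝ → (Fin d → ℝ) → (Fin d → ℝ))
    (st : ℝ → (Fin d → ℝ) → ℝ)
    (hmt : ∀ t x i, mt t x i
      = m t x i + β * (V₁ (ρ t x) * pd d (fun z => deriv E (ρ t z)) i x))
    (hst : ∀ t x, st t x = s t x + β * (V₂ (ρ t x) * deriv E (ρ t x))) :
    (∫ t in Set.Icc (0 : ℝ) T, ∫ x in Set.Icc (0 : Fin d → ℝ) 1,
        ((∑ i, (mt t x i) ^ 2) / (2 * V₁ (ρ t x))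
          + (st t x) ^ 2 / (2 * V₂ (ρ t x))))
      = (∫ t in Set.Icc (0 : ℝ) T, ∫ x in Set.Icc (0 : Fin d → ℝ) 1,
          ((∑ i, (m t x i) ^ 2) / (2 * V₁ (ρ t x))
            + (s t x) ^ 2 / (2 * V₂ (ρ t x))
            + (β ^ 2 / 2) * V₁ (ρ t x)
                * (∑ i, (pd d (fun z => deriv E (ρ t z)) i x) ^ 2)
            + (β ^ 2 / 2) * V₂ (ρ t x) * (deriv E (ρ t x)) ^ 2))
        + β * ∫ x in Set.Icc (0 : Fin d → ℝ) 1, (E (ρ T x) - E (ρ 0 x)) :=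
  scalar_mfc_energy_identity_general d T hT β V₁ V₂ hV₁c hV₂c hV₁pos hV₂pos E hE ρ hρ m hmc hmx s
    hsc hbc hpde mt st hmt hst
end
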